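/- Let n ≥ 3 and let Φ = {±(e_i − e_j) : 1 ≤ i < j ≤ n} ⊂ ℝ^n be the type A_{n−1} root system, whose reflection group W ≅ S_n acts by permuting coordinates. Then every full circuit C ⊆ Φ lies in the W-orbit of the circuit C_0 = {e_1 − e_2, e_2 − e_3, …, e_{n−1} − e_n, e_n − e_1}, up to replacing roots by their negatives; that is, there is a permutation w ∈ S_n with {ℝα : α ∈ C} = {ℝ·w(β) : β ∈ C_0}. -/

import Mathlib

open scoped RealInnerProductSpace

variable {V : Type*} [NormedAddCommGroup V] [InnerProductSpace ℝ V] [FiniteDimensional ℝ V]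

/-- The orthogonal reflection in the hyperplane `α^⊥`. -/
noncomputable def reflAlong (α : V) : V ≃ₗᵢ[ℝ] V :=
  Submodule.reflection ((Submodule.span ℝ {α})ᗮ)

/-- An orthogonal reflection: the reflection through the hyperplane orthogonal to some
nonzero vector. -/
def IsReflection (g : V ≃ₗᵢ[ℝ] V) : Prop :=
  ∃ α : V, α ≠ 0 ∧ g = reflAlong α

/-- A finite real reflection group: a finite subgroup of the orthogonal group generated by its
reflections and fixing no nonzero vector. -/
def IsReflectionGroup (W : Subgroup (V ≃ₗᵢ[ℝ] V)) : Prop :=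
  (W : Set (V ≃ₗᵢ[ℝ] V)).Finite ∧
    Subgroup.closure {g | g ∈ W ∧ IsReflection g} = W ∧
    ∀ v : V, (∀ g ∈ W, g v = v) → v = 0
/-- A circuit: a finite linearly dependent set of vectors, every proper subset of which is
linearly independent. -/
def IsCircuit {V' : Type*} [AddCommGroup V'] [Module ℝ V'] (C : Set V') : Prop :=
  C.Finite ∧ ¬ LinearIndependent ℝ (fun x : C => (x : V')) ∧
    ∀ D : Set V', D ⊂ C → LinearIndependent ℝ (fun x : D => (x : V'))

/-- The standard basis vector `e_i` of `ℝⁿ`. -/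
noncomputable def eA (n : ℕ) (i : Fin n) : EuclideanSpace ℝ (Fin n) :=
  EuclideanSpace.single i 1

/-- The type `A_{n-1}` root system `{± (e_i - e_j) : i < j}`. -/
def PhiA (n : ℕ) : Set (EuclideanSpace ℝ (Fin n)) :=
  {x | ∃ i j : Fin n, i ≠ j ∧ x = eA n i - eA n j}

/-- The action of a permutation on `ℝⁿ` by permuting coordinates (so `e_i ↦ e_{σ i}`). -/
noncomputable def permuteCoords {n : ℕ} (σ : Equiv.Perm (Fin n))
    (x : EuclideanSpace ℝ (Fin n)) : EuclideanSpace ℝ (Fin n) :=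
  (WithLp.equiv 2 (Fin n → ℝ)).symm fun j => x (σ⁻¹ j)

/-- The set of lines spanned by the elements of `C`. -/
def linesOf {V' : Type*} [AddCommGroup V'] [Module ℝ V'] (C : Set V') :
    Set (Submodule ℝ V') :=
  (fun v => Submodule.span ℝ {v}) '' C

/-!
Scale a dependency `∑ c_α α = 0` of the circuit so that every root reads `|c_α| (e_h - e_t)`:
each root becomes an edge `t → h` on the vertex set `Fin n` carrying a positive weight, and the
dependency says that at every vertex the incoming and outgoing weights balance. A coordinate
touched by no root of `C` would be fixed by all the reflections in `C`, contradicting fullness,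
so every vertex has an incoming and an outgoing edge. Since `C` minus one root is independent
inside the hyperplane `∑ xᵢ = 0`, `|C| ≤ n`; hence heads and tails are bijections onto `Fin n`
and define a fixed-point-free permutation `τ` (tail ↦ head). The edges over a single `τ`-orbit
already sum to zero, so minimality of the circuit forces `τ` to be an `n`-cycle, i.e. a
conjugate `σ (i ↦ i + 1) σ⁻¹`, and `σ` is the required permutation.
-/

open Finset Equiv Module Submodule

namespace IsCircuit

variable {E : Type*} [AddCommGroup E] [Module ℝ E] {F : Finset E}

theorem nonempty {C : Set E} (hC : IsCircuit C) : C.Nonempty := by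
  rw [Set.nonempty_iff_ne_empty]
  rintro rfl
  exact hC.2.1 (by simp)

theorem eq_zero_of_sum_smul_eq_zero (hC : IsCircuit (F : Set E)) {s : Finset F}
    (hs : s ≠ univ) {g : F → ℝ} (hg : ∑ x ∈ s, g x • (x : E) = 0) : ∀ x ∈ s, g x = 0 := by
  have hsub : Subtype.val '' (s : Set F) ⊂ (F : Set E) := by
    refine ⟨by rintro _ ⟨x, -, rfl⟩; exact x.2, fun hsup => hs (eq_univ_of_forall fun x => ?_)⟩
    obtain ⟨y, hy, hyx⟩ := hsup x.2
    rwa [← Subtype.ext hyx]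
  exact linearIndepOn_finset_iff.mp
    ((linearIndepOn_iff_image Subtype.val_injective.injOn).mpr (hC.2.2 _ hsub)) g hg

theorem exists_sum_smul_eq_zero (hC : IsCircuit (F : Set E)) :
    ∃ c : F → ℝ, (∀ x, c x ≠ 0) ∧ ∑ x, c x • (x : E) = 0 := by
  classical
  obtain ⟨c, hc, x₀, hx₀⟩ := Fintype.not_linearIndependent_iff.mp hC.2.1
  refine ⟨c, fun x hx => ?_, hc⟩
  have hsupp : ∑ y with c y ≠ 0, c y • (y : E) = 0 := by
    rw [sum_filter_of_ne fun y _ hy => left_ne_zero_of_smul hy]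
    exact hc
  have hs : univ.filter (c · ≠ 0) ≠ univ :=
    (ne_of_mem_of_not_mem' (mem_univ x) (by simp [hx])).symm
  exact hx₀ (hC.eq_zero_of_sum_smul_eq_zero hs hsupp x₀ (by simpa using hx₀))

theorem card_le_finrank_add_one (hC : IsCircuit (F : Set E)) (W : Submodule ℝ E)
    [FiniteDimensional ℝ W] (hFW : (F : Set E) ⊆ W) : F.card ≤ finrank ℝ W + 1 := by
  classical
  obtain ⟨x₀, hx₀⟩ := hC.nonempty
  have hind : LinearIndepOn ℝ id (F.erase x₀ : Set E) :=
    hC.2.2 _ (coe_ssubset.mpr (erase_ssubset hx₀))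
  have hspan : span ℝ (F.erase x₀ : Set E) ≤ W :=
    span_le.mpr ((coe_subset.mpr (erase_subset x₀ F)).trans hFW)
  have := finrank_span_finset_eq_card hind ▸ Submodule.finrank_mono hspan
  rw [card_erase_of_mem hx₀] at this
  omega

end IsCircuit

omit [FiniteDimensional ℝ V] in
theorem apply_eq_self_of_mem_closure_reflAlong {S : Set V} {v : V} (hv : ∀ α ∈ S, ⟪α, v⟫ = 0)
    {g : V ≃ₗᵢ[ℝ] V} (hg : g ∈ Subgroup.closure (reflAlong '' S)) : g v = v := by
  induction hg using Subgroup.closure_induction with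
  | mem g hg =>
    obtain ⟨α, hα, rfl⟩ := hg
    exact reflection_mem_subspace_eq_self (mem_orthogonal_singleton_iff_inner_right.mpr (hv α hα))
  | one => rfl
  | mul g h _ _ hg hh => simp [hg, hh]
  | inv g _ hg => simpa using congr_arg g.symm hg.symm

section RootSystemA

variable {n : ℕ} {F : Finset (EuclideanSpace ℝ (Fin n))}

theorem eA_apply (i j : Fin n) : eA n i j = if j = i then 1 else 0 :=
  PiLp.single_apply 2 ℝ i 1 j

theorem inner_eA_right (x : EuclideanSpace ℝ (Fin n)) (i : Fin n) : ⟪x, eA n i⟫ = x i := by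
  simp [eA, EuclideanSpace.inner_single_right]

theorem eA_injective : Function.Injective (eA n) := fun i j h => by
  simpa [eA_apply] using congr_arg (· i) h

theorem reflAlong_eA_sub_eA (i j : Fin n) : reflAlong (eA n i - eA n j) (eA n i) = eA n j :=
  reflection_sub (by simp [eA])

theorem inner_eA_sub_eA_eA {h t i : Fin n} (hh : i ≠ h) (ht : i ≠ t) :
    ⟪eA n h - eA n t, eA n i⟫ = 0 := by
  simp [inner_eA_right, eA_apply, hh, ht]

theorem PhiA_subset_orthogonal :
    PhiA n ⊆ (ℝ ∙ (WithLp.toLp 2 1 : EuclideanSpace ℝ (Fin n)))ᗮ := by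
  rintro _ ⟨i, j, -, rfl⟩
  rw [SetLike.mem_coe, mem_orthogonal_singleton_iff_inner_right, inner_sub_right,
    inner_eA_right, inner_eA_right]
  simp

theorem card_le_of_isCircuit_subset_PhiA (hC : IsCircuit (F : Set (EuclideanSpace ℝ (Fin n))))
    (hF : (F : Set (EuclideanSpace ℝ (Fin n))) ⊆ PhiA n) : F.card ≤ n := by
  obtain ⟨x, hx⟩ := hC.nonempty
  obtain ⟨i, -, -, -⟩ := hF hx
  have hone : (WithLp.toLp 2 1 : EuclideanSpace ℝ (Fin n)) ≠ 0 := fun h => by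
    simpa using congr_arg (· i) h
  have hdim := finrank_add_finrank_orthogonal (ℝ ∙ (WithLp.toLp 2 1 : EuclideanSpace ℝ (Fin n)))
  rw [finrank_span_singleton hone, finrank_euclideanSpace_fin] at hdim
  exact (hC.card_le_finrank_add_one _ (hF.trans PhiA_subset_orthogonal)).trans_eq
    ((add_comm _ _).trans hdim)

theorem exists_smul_eq_abs_smul_sub {x : EuclideanSpace ℝ (Fin n)} (hx : x ∈ PhiA n) (c : ℝ) :
    ∃ h t, h ≠ t ∧ c • x = |c| • (eA n h - eA n t) := by
  obtain ⟨i, j, hij, rfl⟩ := hx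
  rcases le_or_gt 0 c with hc | hc
  · exact ⟨i, j, hij, by rw [abs_of_nonneg hc]⟩
  · exact ⟨j, i, hij.symm, by rw [abs_of_neg hc, neg_smul, ← smul_neg, neg_sub]⟩

theorem IsCircuit.exists_balanced_orientation
    (hC : IsCircuit (F : Set (EuclideanSpace ℝ (Fin n))))
    (hF : (F : Set (EuclideanSpace ℝ (Fin n))) ⊆ PhiA n) :
    ∃ (w : F → ℝ) (hd tl : F → Fin n), (∀ x, 0 < w x) ∧ (∀ x, hd x ≠ tl x) ∧
      (∀ x : F, ℝ ∙ (x : EuclideanSpace ℝ (Fin n)) = ℝ ∙ (eA n (hd x) - eA n (tl x))) ∧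
      ∑ x, w x • (eA n (hd x) - eA n (tl x)) = 0 := by
  obtain ⟨c, hc, hsum⟩ := hC.exists_sum_smul_eq_zero
  choose hd tl hne horient using fun x : F => exists_smul_eq_abs_smul_sub (hF x.2) (c x)
  refine ⟨fun x => |c x|, hd, tl, fun x => abs_pos.mpr (hc x), hne, fun x => ?_, ?_⟩
  · rw [← span_singleton_smul_eq (hc x).isUnit, horient,
      span_singleton_smul_eq (abs_ne_zero.mpr (hc x)).isUnit]
  · simpa [horient] using hsum

theorem exists_endpoint_eq_of_closure_eq
    (hfull : Subgroup.closure (reflAlong '' (F : Set (EuclideanSpace ℝ (Fin n)))) =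
      Subgroup.closure (reflAlong '' PhiA n))
    (hn : 2 ≤ n) {hd tl : F → Fin n}
    (hline : ∀ x : F, ℝ ∙ (x : EuclideanSpace ℝ (Fin n)) = ℝ ∙ (eA n (hd x) - eA n (tl x)))
    (i : Fin n) : ∃ x, hd x = i ∨ tl x = i := by
  by_contra! hi
  have : Nontrivial (Fin n) := Fin.nontrivial_iff_two_le.mpr hn
  obtain ⟨j, hji⟩ := exists_ne i
  have horth : ∀ α ∈ (F : Set (EuclideanSpace ℝ (Fin n))), ⟪α, eA n i⟫ = 0 := fun α hα => by
    obtain ⟨a, ha⟩ := mem_span_singleton.mp (hline ⟨α, hα⟩ ▸ mem_span_singleton_self α)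
    rw [← ha, inner_smul_left, inner_eA_sub_eA_eA (hi _).1.symm (hi _).2.symm, mul_zero]
  have hmem : reflAlong (eA n i - eA n j) ∈ Subgroup.closure (reflAlong '' (F : Set _)) :=
    hfull ▸ Subgroup.subset_closure ⟨_, ⟨i, j, hji.symm, rfl⟩, rfl⟩
  have hfix := apply_eq_self_of_mem_closure_reflAlong horth hmem
  rw [reflAlong_eA_sub_eA] at hfix
  exact hji (eA_injective hfix)

section Balanced

/- An `x : ι` is an edge `tl x → hd x` of weight `w x`; `hflow` says that at every vertex the
incoming and outgoing weights agree. -/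
variable {ι : Type*} [Fintype ι] {w : ι → ℝ} {hd tl : ι → Fin n}

theorem sum_filter_head_eq_sum_filter_tail
    (hflow : ∑ x, w x • (eA n (hd x) - eA n (tl x)) = 0) (i : Fin n) :
    ∑ x with hd x = i, w x = ∑ x with tl x = i, w x := by
  have := congr_arg (⟪·, eA n i⟫) hflow
  simp only [sum_inner, inner_smul_left, inner_sub_left, inner_eA_right, eA_apply] at this
  simpa [mul_sub, sum_sub_distrib, sub_eq_zero, sum_filter, @eq_comm _ i] using this

theorem exists_tail_eq_of_head_eq (hw : ∀ x, 0 < w x)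
    (hflow : ∑ x, w x • (eA n (hd x) - eA n (tl x)) = 0) (x : ι) : ∃ y, tl y = hd x := by
  have hpos : 0 < ∑ y with hd y = hd x, w y := sum_pos (fun y _ => hw y) ⟨x, by simp⟩
  rw [sum_filter_head_eq_sum_filter_tail hflow] at hpos
  obtain ⟨y, hy⟩ := nonempty_of_sum_ne_zero hpos.ne'
  exact ⟨y, (mem_filter.mp hy).2⟩

theorem exists_equiv_eq_tail_of_balanced (hw : ∀ x, 0 < w x)
    (hflow : ∑ x, w x • (eA n (hd x) - eA n (tl x)) = 0)
    (hcover : ∀ i, ∃ x, hd x = i ∨ tl x = i) (hcard : Fintype.card ι ≤ n) :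
    ∃ (e : ι ≃ Fin n) (τ : Perm (Fin n)), ⇑e = tl ∧ ∀ x, hd x = τ (tl x) := by
  have hflow' : ∑ x, w x • (eA n (tl x) - eA n (hd x)) = 0 := by
    rw [← neg_eq_zero, ← sum_neg_distrib, ← hflow]
    simp_rw [← smul_neg, neg_sub]
  have htl : Function.Surjective tl := fun i => by
    obtain ⟨x, rfl | rfl⟩ := hcover i
    · exact exists_tail_eq_of_head_eq hw hflow x
    · exact ⟨x, rfl⟩
  have hhd : Function.Surjective hd := fun i => by
    obtain ⟨x, rfl | rfl⟩ := hcover i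
    · exact ⟨x, rfl⟩
    · exact exists_tail_eq_of_head_eq hw hflow' x
  have hbij : ∀ f : ι → Fin n, Function.Surjective f → Function.Bijective f := fun f hf =>
    (Fintype.bijective_iff_surjective_and_card f).mpr
      ⟨hf, le_antisymm (by simpa using hcard) (Fintype.card_le_of_surjective f hf)⟩
  let e := Equiv.ofBijective tl (hbij tl htl)
  exact ⟨e, e.symm.trans (Equiv.ofBijective hd (hbij hd hhd)), rfl, fun x => by simp [e]⟩

end Balanced

theorem IsCircuit.sameCycle_of_span_eq (hC : IsCircuit (F : Set (EuclideanSpace ℝ (Fin n))))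
    (e : F ≃ Fin n) {τ : Perm (Fin n)} (hτ : ∀ k, τ k ≠ k)
    (hline : ∀ x : F, ℝ ∙ (x : EuclideanSpace ℝ (Fin n)) = ℝ ∙ (eA n (τ (e x)) - eA n (e x)))
    (i j : Fin n) : τ.SameCycle i j := by
  choose ε hε using fun x : F => mem_span_singleton.mp
    (by rw [hline x]; exact mem_span_singleton_self _ :
      eA n (τ (e x)) - eA n (e x) ∈ ℝ ∙ (x : EuclideanSpace ℝ (Fin n)))
  have hsum : ∑ x with τ.SameCycle i (e x), ε x • (x : EuclideanSpace ℝ (Fin n)) = 0 := by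
    calc _ = ∑ x with τ.SameCycle i (e x), (eA n (τ (e x)) - eA n (e x)) :=
          sum_congr rfl fun x _ => hε x
      _ = ∑ k with τ.SameCycle i k, (eA n (τ k) - eA n k) :=
          sum_equiv e (by simp) fun _ _ => rfl
      _ = 0 := by
          rw [sum_sub_distrib, sub_eq_zero]
          exact sum_equiv τ (by simp [Perm.sameCycle_apply_right]) fun _ _ => rfl
  by_contra hij
  have hne : univ.filter (fun x => τ.SameCycle i (e x)) ≠ univ := by
    refine (ne_of_mem_of_not_mem' (mem_univ (e.symm j)) ?_).symm
    rw [mem_filter, e.apply_symm_apply]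
    exact fun h => hij h.2
  have h0 := hε (e.symm i)
  rw [hC.eq_zero_of_sum_smul_eq_zero hne hsum _
    (mem_filter.mpr ⟨mem_univ _, by rw [e.apply_symm_apply]⟩), zero_smul, e.apply_symm_apply,
    eq_comm, sub_eq_zero] at h0
  exact hτ i (eA_injective h0)

theorem Equiv.Perm.isConj_finRotate_of_forall_sameCycle {τ : Perm (Fin n)} (hn : 2 ≤ n)
    (hτ : ∀ k, τ k ≠ k) (hcyc : ∀ i j, τ.SameCycle i j) : IsConj τ (finRotate n) := by
  have hsupp : τ.support = univ := eq_univ_of_forall fun k => mem_support.mpr (hτ k)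
  refine IsCycle.isConj ⟨⟨0, by omega⟩, hτ _, fun _ _ => hcyc _ _⟩ (isCycle_finRotate_of_le hn) ?_
  rw [hsupp, support_finRotate_of_le hn]

theorem linesOf_eq_range_of_span_eq (e : F ≃ Fin n) {τ : Perm (Fin n)}
    (hline : ∀ x : F, ℝ ∙ (x : EuclideanSpace ℝ (Fin n)) = ℝ ∙ (eA n (τ (e x)) - eA n (e x))) :
    linesOf (F : Set (EuclideanSpace ℝ (Fin n))) =
      Set.range fun k => ℝ ∙ (eA n (τ k) - eA n k) := by
  rw [linesOf, Set.image_eq_range, ← e.surjective.range_comp]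
  exact congr_arg Set.range (funext hline)

theorem permuteCoords_eA_sub_eA (σ : Perm (Fin n)) (i j : Fin n) :
    permuteCoords σ (eA n i - eA n j) = eA n (σ i) - eA n (σ j) := by
  ext k
  simp [permuteCoords, eA_apply, Equiv.symm_apply_eq]

theorem finRotate_eq_mk_mod (hn : 0 < n) (i : Fin n) :
    finRotate n i = ⟨((i : ℕ) + 1) % n, Nat.mod_lt _ hn⟩ := by
  obtain ⟨m, rfl⟩ := Nat.exists_eq_add_of_lt hn
  ext
  simp [finRotate_apply, Fin.val_add]

theorem linesOf_permuteCoords_cycle (σ : Perm (Fin n)) (hn : 0 < n) :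
    linesOf (permuteCoords σ '' Set.range fun i : Fin n =>
        eA n i - eA n ⟨((i : ℕ) + 1) % n, Nat.mod_lt _ hn⟩) =
      Set.range fun k => ℝ ∙ (eA n ((σ * finRotate n * σ⁻¹) k) - eA n k) := by
  rw [linesOf, ← Set.range_comp, ← Set.range_comp]
  conv_rhs => rw [← σ.surjective.range_comp]
  congr 1
  funext k
  simp only [Function.comp_apply, permuteCoords_eA_sub_eA, Perm.mul_apply, Perm.coe_inv,
    symm_apply_apply, ← finRotate_eq_mk_mod hn]
  rw [← neg_sub, ← Set.neg_singleton, span_neg]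

end RootSystemA

/-- Every full circuit in the type `A_{n-1}` root system lies, up to signs of the roots, in the
`S_n`-orbit of the standard cyclic circuit `{e_1 - e_2, …, e_{n-1} - e_n, e_n - e_1}`. -/
theorem stmt6 (n : ℕ) (hn : 3 ≤ n)
    (C : Set (EuclideanSpace ℝ (Fin n)))
    (hCΦ : C ⊆ PhiA n) (hcirc : IsCircuit C)
    (hfull : Subgroup.closure (reflAlong '' C)
      = Subgroup.closure (reflAlong '' PhiA n)) :
    ∃ σ : Equiv.Perm (Fin n),
      linesOf C =
        linesOf (permuteCoords σ ''
          (Set.range fun i : Fin n =>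
            eA n i - eA n ⟨((i : ℕ) + 1) % n, Nat.mod_lt _ (by omega)⟩)) := by
  obtain ⟨F, rfl⟩ := hcirc.1.exists_finset_coe
  obtain ⟨w, hd, tl, hw, hne, hline, hflow⟩ := hcirc.exists_balanced_orientation hCΦ
  obtain ⟨e, τ, rfl, hτ⟩ := exists_equiv_eq_tail_of_balanced hw hflow
    (exists_endpoint_eq_of_closure_eq hfull (by omega) hline)
    (by simpa using card_le_of_isCircuit_subset_PhiA hcirc hCΦ)
  simp only [hτ] at hne hline
  have hfix : ∀ k, τ k ≠ k := fun k => by simpa using hne (e.symm k)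
  have hcyc := hcirc.sameCycle_of_span_eq e hfix hline
  obtain ⟨σ, rfl⟩ :=
    isConj_iff.mp (Perm.isConj_finRotate_of_forall_sameCycle (by omega) hfix hcyc).symm
  exact ⟨σ, by rw [linesOf_eq_range_of_span_eq e hline, linesOf_permuteCoords_cycle σ (by omega)]⟩
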